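/- arXiv:2511.21534 — 2 statements merged into one kernel-verified Lean document; each statement's English description precedes it below -/
import Mathlib

section
/- IPW identification with undefined potential outcomes (Proposition 3): under consistency given N, positivity, conditional exchangeability given (𝓕, N), and the assumption that the propensity scores do not depend on N, the estimand φ := Σ_{n=0}^{g_max} E[Y^(1) − Y^(0) | N=n]·P(N=n) = E[Y^(1) − Y^(0)] satisfies φ = E[ 1{A=1}·Y / π₁ ] − E[ 1{A=0}·Y / π₀ ]. -/
open MeasureTheory ProbabilityTheory Set

/-- The indicator function of a set, as a real-valued random variable. -/
noncomputable def ind {Ω : Type*} (s : Set Ω) : Ω → ℝ := s.indicator fun _ => 1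

/-!
Summing `E[f | N = n] · P(N = n)` over the finitely many values of `N` is the law of total
expectation. For the weighting formula, conditional exchangeability makes
`E[1{A=a} · Y^(a) | 𝓕 ∨ σ(N)]` factor as `π_a · E[Y^(a) | 𝓕 ∨ σ(N)]`: under almost every
measure of the regular conditional distribution the two variables are independent, so their
product integrates to the product of the integrals. As `π_a` is `𝓕`-measurable and nonzero it
can be pulled out of the conditional expectation and cancelled, whence
`E[1{A=a} · Y^(a) / π_a] = E[Y^(a)]`; consistency replaces `Y` by `Y^(a)` on `{A = a}`.
-/

section Indicator

variable {Ω : Type*}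

lemma ind_mul_eq_indicator (s : Set Ω) (f : Ω → ℝ) :
    (fun ω => ind s ω * f ω) = s.indicator f := by
  funext ω
  by_cases h : ω ∈ s <;> simp [ind, h]

variable [mΩ : MeasurableSpace Ω]

lemma measurable_ind {s : Set Ω} (hs : MeasurableSet s) : Measurable (ind s) :=
  measurable_const.indicator hs

lemma MeasureTheory.Integrable.ind_mul {μ : Measure Ω} {s : Set Ω} (hs : MeasurableSet s)
    {f : Ω → ℝ} (hf : Integrable f μ) : Integrable (fun ω => ind s ω * f ω) μ := by
  rw [ind_mul_eq_indicator]
  exact hf.indicator hs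

lemma integrable_ind {μ : Measure Ω} [IsFiniteMeasure μ] {s : Set Ω} (hs : MeasurableSet s) :
    Integrable (ind s) μ :=
  (integrable_const (1 : ℝ)).indicator hs

variable {β : Type*} [MeasurableSpace β] [MeasurableSingletonClass β] {G : Ω → β}
  {s : Finset β} {Z : β → Ω → ℝ}

lemma measurable_sum_ind_fiber_mul (hG : Measurable G) (hZ : ∀ g ∈ s, Measurable (Z g)) :
    Measurable fun ω => ∑ g ∈ s, ind {ω' | G ω' = g} ω * Z g ω :=
  Finset.measurable_sum _ fun g hg =>
    (measurable_ind (hG (measurableSet_singleton g))).mul (hZ g hg)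

lemma integrable_sum_ind_fiber_mul {μ : Measure Ω} (hG : Measurable G)
    (hZ : ∀ g ∈ s, Integrable (Z g) μ) :
    Integrable (fun ω => ∑ g ∈ s, ind {ω' | G ω' = g} ω * Z g ω) μ :=
  integrable_finsetSum _ fun g hg => (hZ g hg).ind_mul (hG (measurableSet_singleton g))

end Indicator

lemma integral_cond_mul_measure_eq_setIntegral {Ω : Type*} [mΩ : MeasurableSpace Ω]
    {μ : Measure Ω} [IsFiniteMeasure μ] (s : Set Ω) (f : Ω → ℝ) :
    (∫ ω, f ω ∂μ[|s]) * (μ s).toReal = ∫ ω in s, f ω ∂μ := by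
  by_cases hs : μ s = 0
  · simp [hs, Measure.restrict_eq_zero.mpr hs]
  · rw [ProbabilityTheory.cond, integral_smul_measure, ENNReal.toReal_inv, smul_eq_mul]
    field_simp [ENNReal.toReal_ne_zero.mpr ⟨hs, measure_ne_top μ s⟩]

theorem sum_integral_cond_mul_measure_eq_integral {Ω α : Type*} [mΩ : MeasurableSpace Ω]
    [MeasurableSpace α] [MeasurableSingletonClass α] {μ : Measure Ω} [IsFiniteMeasure μ]
    {X : Ω → α} (hX : Measurable X) {s : Finset α} (hXs : ∀ ω, X ω ∈ s)
    {f : Ω → ℝ} (hf : Integrable f μ) :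
    ∑ x ∈ s, (∫ ω, f ω ∂μ[|X ⁻¹' {x}]) * (μ (X ⁻¹' {x})).toReal = ∫ ω, f ω ∂μ := by
  have hcover : ⋃ x ∈ s, X ⁻¹' {x} = univ :=
    eq_univ_of_forall fun ω => mem_biUnion (hXs ω) rfl
  simp_rw [integral_cond_mul_measure_eq_setIntegral]
  rw [← integral_biUnion_finset s (fun x _ => hX (measurableSet_singleton x))
    (pairwiseDisjoint_fiber X s) (fun _ _ => hf.integrableOn), hcover, setIntegral_univ]

section CondIndep

variable {Ω : Type*} {m mΩ : MeasurableSpace Ω} [StandardBorelSpace Ω] {hm : m ≤ mΩ}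
  {μ : Measure Ω} [IsFiniteMeasure μ] {f g : Ω → ℝ}

theorem ProbabilityTheory.CondIndepFun.condExp_mul (hfg : CondIndepFun m hm f g μ)
    (hf : Measurable f) (hg : Measurable g) (hfi : Integrable f μ) (hgi : Integrable g μ)
    (hfgi : Integrable (f * g) μ) :
    μ[f * g | m] =ᵐ[μ] μ[f | m] * μ[g | m] := by
  have hindep : ∀ᵐ ω ∂μ, IndepFun f g (condExpKernel μ m ω) := by
    refine ae_of_ae_trim hm ?_
    filter_upwards [(condIndepFun_iff_map_prod_eq_prod_map_map hf hg).1 hfg] with ω hω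
    rw [indepFun_iff_map_prod_eq_prod_map_map hf.aemeasurable hg.aemeasurable]
    simpa [Kernel.map_apply _ (hf.prodMk hg), Kernel.map_apply _ hf, Kernel.map_apply _ hg,
      Kernel.prod_apply] using hω
  filter_upwards [hindep, condExp_ae_eq_integral_condExpKernel hm hfi,
    condExp_ae_eq_integral_condExpKernel hm hgi,
    condExp_ae_eq_integral_condExpKernel hm hfgi] with ω hω hf' hg' hfg'
  rw [Pi.mul_apply, hf', hg', hfg']
  exact hω.integral_fun_mul_eq_mul_integral hf.aestronglyMeasurable hg.aestronglyMeasurable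

theorem integral_mul_div_condExp_eq_integral (hgf : CondIndepFun m hm g f μ)
    (hg : Measurable g) (hf : Measurable f) (hgi : Integrable g μ) (hfi : Integrable f μ)
    (hgfi : Integrable (g * f) μ) {π : Ω → ℝ} (hπm : StronglyMeasurable[m] π)
    (hπ : μ[g | m] =ᵐ[μ] π) (hπ0 : ∀ᵐ ω ∂μ, π ω ≠ 0)
    (hint : Integrable (fun ω => g ω * f ω / π ω) μ) :
    ∫ ω, g ω * f ω / π ω ∂μ = ∫ ω, f ω ∂μ := by
  have hweighted : (fun ω => g ω * f ω / π ω) = π⁻¹ * (g * f) := by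
    funext ω
    simp only [Pi.mul_apply, Pi.inv_apply]
    ring
  rw [hweighted] at hint ⊢
  have hcond : μ[π⁻¹ * (g * f) | m] =ᵐ[μ] μ[f | m] := by
    filter_upwards [condExp_mul_of_stronglyMeasurable_left hπm.measurable.inv.stronglyMeasurable
      hint hgfi, CondIndepFun.condExp_mul hgf hg hf hgi hfi hgfi, hπ, hπ0] with ω h₁ h₂ h₃ h₄
    rw [h₁, Pi.mul_apply, h₂, Pi.mul_apply, h₃, Pi.inv_apply, inv_mul_cancel_left₀ h₄]
  calc ∫ ω, (π⁻¹ * (g * f)) ω ∂μ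
      = ∫ ω, (μ[π⁻¹ * (g * f) | m]) ω ∂μ := (integral_condExp hm).symm
    _ = ∫ ω, (μ[f | m]) ω ∂μ := integral_congr_ae hcond
    _ = ∫ ω, f ω ∂μ := integral_condExp hm

end CondIndep

lemma ind_mul_observed_eq_ind_mul_potential {Ω : Type*} {A : Ω → ℕ} {Ya : ℕ → Ω → ℝ}
    {Y : Ω → ℝ}
    (hY : ∀ ω, Y ω = ind {ω' | A ω' = 1} ω * Ya 1 ω + ind {ω' | A ω' = 0} ω * Ya 0 ω)
    {a : ℕ} (ha : a ≤ 1) (ω : Ω) :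
    ind {ω' | A ω' = a} ω * Y ω = ind {ω' | A ω' = a} ω * Ya a ω := by
  rw [hY]
  by_cases h₁ : A ω = 1 <;> by_cases h₀ : A ω = 0 <;> interval_cases a <;> simp [ind, h₀, h₁]

theorem ipw_identification_undefined_potential_outcomes_general
    {Ω : Type*} [mΩ : MeasurableSpace Ω] [StandardBorelSpace Ω]
    (μ : Measure Ω) [IsProbabilityMeasure μ]
    (gmax : ℕ)
    (A N G : Ω → ℕ) (hN : ∀ ω, N ω ≤ gmax)
    (hAmeas : Measurable A) (hNmeas : Measurable N) (hGmeas : Measurable G)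
    (Ypo : ℕ → ℕ → Ω → ℝ)
    (hYpomeas : ∀ a ≤ 1, ∀ g ≤ gmax, Measurable (Ypo a g))
    (hYposq : ∀ a ≤ 1, ∀ g ≤ gmax, MemLp (Ypo a g) 2 μ)
    (Ya : ℕ → Ω → ℝ)
    (hYa : ∀ a ω, Ya a ω = ∑ g ∈ Finset.range (gmax + 1), ind {ω' | G ω' = g} ω * Ypo a g ω)
    (Y : Ω → ℝ)
    (hY : ∀ ω, Y ω = ind {ω' | A ω' = 1} ω * Ya 1 ω + ind {ω' | A ω' = 0} ω * Ya 0 ω)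
    (mF : MeasurableSpace Ω) (hF : mF ≤ mΩ)
    (π : ℕ → Ω → ℝ)
    (hπ : ∀ a, π a = μ[ind {ω | A ω = a} | mF])
    -- the propensity score does not depend on N
    (hπN : ∀ a ≤ 1,
      μ[ind {ω | A ω = a} | mF ⊔ MeasurableSpace.comap N inferInstance] =ᵐ[μ] π a)
    (hπpos : ∀ a ≤ 1, ∀ᵐ ω ∂μ, 0 < π a ω)
    -- conditional exchangeability given (𝓕, N)
    (hexch : ∀ a ≤ 1,
      CondIndepFun (mF ⊔ MeasurableSpace.comap N inferInstance)
        (sup_le hF hNmeas.comap_le) (Ya a) A μ)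
    (hint : ∀ a ≤ 1, Integrable (fun ω => ind {ω' | A ω' = a} ω * Y ω / π a ω) μ) :
    (∑ n ∈ Finset.range (gmax + 1),
        (∫ ω, (Ya 1 ω - Ya 0 ω) ∂(μ[|{ω | N ω = n}])) * (μ {ω | N ω = n}).toReal)
      = ∫ ω, (Ya 1 ω - Ya 0 ω) ∂μ
    ∧ ∫ ω, (Ya 1 ω - Ya 0 ω) ∂μ
      = (∫ ω, ind {ω' | A ω' = 1} ω * Y ω / π 1 ω ∂μ)
        - ∫ ω, ind {ω' | A ω' = 0} ω * Y ω / π 0 ω ∂μ := by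
  have hYa_meas : ∀ a ≤ 1, Measurable[mΩ] (Ya a) := fun a ha => by
    rw [funext (hYa a)]
    exact measurable_sum_ind_fiber_mul (mΩ := mΩ) hGmeas fun g hg =>
      hYpomeas a ha g (Finset.mem_range_succ_iff.mp hg)
  have hYa_int : ∀ a ≤ 1, Integrable (Ya a) μ := fun a ha => by
    rw [funext (hYa a)]
    exact integrable_sum_ind_fiber_mul (mΩ := mΩ) hGmeas fun g hg =>
      (hYposq a ha g (Finset.mem_range_succ_iff.mp hg)).integrable one_le_two
  have hipw : ∀ a ≤ 1, ∫ ω, ind {ω' | A ω' = a} ω * Y ω / π a ω ∂μ = ∫ ω, Ya a ω ∂μ := by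
    intro a ha
    have hB : MeasurableSet[mΩ] {ω' | A ω' = a} := hAmeas (measurableSet_singleton a)
    have hint_a := hint a ha
    simp_rw [ind_mul_observed_eq_ind_mul_potential hY ha] at hint_a ⊢
    exact integral_mul_div_condExp_eq_integral (mΩ := mΩ)
      ((hexch a ha).symm.comp (measurable_ind (measurableSet_singleton a)) measurable_id)
      (measurable_ind (mΩ := mΩ) hB) (hYa_meas a ha) (integrable_ind (mΩ := mΩ) hB)
      (hYa_int a ha) ((hYa_int a ha).ind_mul (mΩ := mΩ) hB)
      ((hπ a).symm ▸ stronglyMeasurable_condExp.mono le_sup_left)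
      (hπN a ha) ((hπpos a ha).mono fun _ h => h.ne') hint_a
  have hdiff := (hYa_int 1 le_rfl).sub (hYa_int 0 zero_le_one)
  refine ⟨sum_integral_cond_mul_measure_eq_integral (mΩ := mΩ) hNmeas
    (fun ω => Finset.mem_range_succ_iff.mpr (hN ω)) hdiff, ?_⟩
  rw [integral_sub (hYa_int 1 le_rfl) (hYa_int 0 zero_le_one), hipw 1 le_rfl, hipw 0 zero_le_one]

/-- **IPW identification with undefined potential outcomes (Proposition 3).**  Under
consistency given `N`, positivity, conditional exchangeability given `(𝓕, N)`, and the
assumption that the propensity scores do not depend on `N`, the estimand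
`φ = Σ_n E[Y^(1) − Y^(0) | N=n]·P(N=n) = E[Y^(1) − Y^(0)]` satisfies
`φ = E[1{A=1}·Y/π₁] − E[1{A=0}·Y/π₀]`. -/
theorem ipw_identification_undefined_potential_outcomes
    {Ω : Type*} [mΩ : MeasurableSpace Ω] [StandardBorelSpace Ω] [Nonempty Ω]
    (μ : Measure Ω) [IsProbabilityMeasure μ]
    (gmax : ℕ)
    (A N G : Ω → ℕ) (hA : ∀ ω, A ω ≤ 1) (hN : ∀ ω, N ω ≤ gmax)
    (hGN : ∀ᵐ ω ∂μ, G ω ≤ N ω)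
    (hAmeas : Measurable A) (hNmeas : Measurable N) (hGmeas : Measurable G)
    (Ypo : ℕ → ℕ → Ω → ℝ)
    (hYpomeas : ∀ a ≤ 1, ∀ g ≤ gmax, Measurable (Ypo a g))
    (hYposq : ∀ a ≤ 1, ∀ g ≤ gmax, MemLp (Ypo a g) 2 μ)
    (Ya : ℕ → Ω → ℝ)
    (hYa : ∀ a ω, Ya a ω = ∑ g ∈ Finset.range (gmax + 1), ind {ω' | G ω' = g} ω * Ypo a g ω)
    (Y : Ω → ℝ)
    (hY : ∀ ω, Y ω = ind {ω' | A ω' = 1} ω * Ya 1 ω + ind {ω' | A ω' = 0} ω * Ya 0 ω)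
    (mF : MeasurableSpace Ω) (hF : mF ≤ mΩ)
    (π : ℕ → Ω → ℝ)
    (hπ : ∀ a, π a = μ[ind {ω | A ω = a} | mF])
    -- the propensity score does not depend on N
    (hπN : ∀ a ≤ 1,
      μ[ind {ω | A ω = a} | mF ⊔ MeasurableSpace.comap N inferInstance] =ᵐ[μ] π a)
    (hπpos : ∀ a ≤ 1, ∀ᵐ ω ∂μ, 0 < π a ω)
    (hNpos : ∀ n ≤ gmax, 0 < μ {ω | N ω = n})
    -- conditional exchangeability given (𝓕, N)
    (hexch : ∀ a ≤ 1,
      CondIndepFun (mF ⊔ MeasurableSpace.comap N inferInstance)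
        (sup_le hF hNmeas.comap_le) (Ya a) A μ)
    (hint : ∀ a ≤ 1, Integrable (fun ω => ind {ω' | A ω' = a} ω * Y ω / π a ω) μ) :
    (∑ n ∈ Finset.range (gmax + 1),
        (∫ ω, (Ya 1 ω - Ya 0 ω) ∂(μ[|{ω | N ω = n}])) * (μ {ω | N ω = n}).toReal)
      = ∫ ω, (Ya 1 ω - Ya 0 ω) ∂μ
    ∧ ∫ ω, (Ya 1 ω - Ya 0 ω) ∂μ
      = (∫ ω, ind {ω' | A ω' = 1} ω * Y ω / π 1 ω ∂μ)
        - ∫ ω, ind {ω' | A ω' = 0} ω * Y ω / π 0 ω ∂μ :=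
  ipw_identification_undefined_potential_outcomes_general (mΩ := mΩ) μ gmax A N G hN hAmeas hNmeas
    hGmeas Ypo hYpomeas hYposq Ya hYa Y hY mF hF π hπ hπN hπpos hexch hint
end

section
/- Bias decomposition with undefined potential outcomes, transport part (Theorem 3, second display): ψ − φ₂ = (ψ − φ₁) + Σ_{g=0}^{g_max} [ Cov( τ(g), υ(g) | V_g=1 ) + E[ τ(g) | V_g=1 ] · ( P(G=g|S=1) − P(G=g|S=2) ) ], where V_g := 1{N ≥ g}, τ(g) := Y^(1,g) − Y^(0,g) (meaningful on {V_g=1}), υ(g) := P(G=g | S=1, V_g=1, 𝓗)·P(V_g=1|S=1) − P(G=g | S=2, V_g=1, 𝓗)·P(V_g=1|S=2), with P(G=g|S=s,V_g=1,𝓗) the 𝓗-measurable conditional probability of {G=g} given 𝓗 under P(·|S=s,V_g=1), and Cov(·,·|V_g=1), E[·|V_g=1] taken under P(·|V_g=1). -/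
open MeasureTheory ProbabilityTheory Set

/-- The covariance of two real random variables, `Cov(f,g) = E[f·g] − E[f]·E[g]`. -/
noncomputable def cov {Ω : Type*} {m : MeasurableSpace Ω} (μ : MeasureTheory.Measure Ω)
    (f g : Ω → ℝ) : ℝ :=
  (∫ ω, f ω * g ω ∂μ) - (∫ ω, f ω ∂μ) * ∫ ω, g ω ∂μ

namespace ProbabilityTheory

section IndepEvent

variable {Ω : Type*} {m' m₁ mΩ : MeasurableSpace Ω} {ν : Measure Ω} [IsFiniteMeasure ν]
  {T : Set Ω}

lemma trim_cond_eq_trim_of_indep (hm' : m' ≤ mΩ) (hind : Indep m₁ m' ν)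
    (hT₁ : MeasurableSet[m₁] T) (hT : MeasurableSet T) (hνT : ν T ≠ 0) :
    (ν[|T]).trim hm' = ν.trim hm' := by
  refine @Measure.ext _ m' _ _ fun H hH => ?_
  rw [trim_measurableSet_eq hm' hH, trim_measurableSet_eq hm' hH, cond_apply hT,
    (Indep_iff _ _ _).1 hind T H hT₁ hH, ENNReal.inv_mul_cancel_left hνT (measure_ne_top ν T)]

lemma integral_cond_of_indep (hm' : m' ≤ mΩ) (hind : Indep m₁ m' ν)
    (hT₁ : MeasurableSet[m₁] T) (hT : MeasurableSet T) (hνT : ν T ≠ 0) {f : Ω → ℝ}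
    (hf : StronglyMeasurable[m'] f) : ∫ ω, f ω ∂(ν[|T]) = ∫ ω, f ω ∂ν := by
  rw [integral_trim hm' hf, integral_trim hm' hf, trim_cond_eq_trim_of_indep hm' hind hT₁ hT hνT]

lemma integrable_of_integrable_cond_of_indep (hm' : m' ≤ mΩ) (hind : Indep m₁ m' ν)
    (hT₁ : MeasurableSet[m₁] T) (hT : MeasurableSet T) (hνT : ν T ≠ 0) {f : Ω → ℝ}
    (hf : StronglyMeasurable[m'] f) (hfi : Integrable f (ν[|T])) : Integrable f ν := by
  refine integrable_of_integrable_trim hm' ?_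
  rw [← trim_cond_eq_trim_of_indep hm' hind hT₁ hT hνT]
  exact hfi.trim hm' hf

lemma condExp_indicator_inter_of_indep (hm' : m' ≤ mΩ) (hind : Indep m₁ m' ν)
    (hT₁ : MeasurableSet[m₁] T) (hT : MeasurableSet T) (hνT : ν T ≠ 0) {B : Set Ω}
    (hB : MeasurableSet B) :
    ν⟦T ∩ B | m'⟧ =ᵐ[ν] fun ω => ν.real T * ((ν[|T])⟦B | m'⟧) ω := by
  set q := (ν[|T])⟦B | m'⟧
  have hq : StronglyMeasurable[m'] q := stronglyMeasurable_condExp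
  have hqi : Integrable q ν :=
    integrable_of_integrable_cond_of_indep hm' hind hT₁ hT hνT hq integrable_condExp
  refine (ae_eq_condExp_of_forall_setIntegral_eq hm' ((integrable_const 1).indicator (hT.inter hB))
    (fun _ _ _ => (hqi.const_mul _).integrableOn) (fun H hH _ => ?_)
    (hq.const_mul _).aestronglyMeasurable).symm
  have hHq : StronglyMeasurable[m'] (H.indicator q) := hq.indicator hH
  calc ∫ ω in H, ν.real T * q ω ∂ν
      = ν.real T * ∫ ω in H, q ω ∂(ν[|T]) := by
        rw [integral_const_mul, ← integral_indicator (hm' H hH), ← integral_indicator (hm' H hH),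
          integral_cond_of_indep hm' hind hT₁ hT hνT hHq]
    _ = ν.real T * (ν[|T]).real (H ∩ B) := by
        rw [setIntegral_condExp hm' ((integrable_const 1).indicator hB) hH,
          setIntegral_indicator hB, setIntegral_const, smul_eq_mul, mul_one]
    _ = ∫ ω in H, (T ∩ B).indicator (fun _ => (1 : ℝ)) ω ∂ν := by
        rw [setIntegral_indicator (hT.inter hB), setIntegral_const, smul_eq_mul, mul_one,
          measureReal_def, measureReal_def, measureReal_def, ← ENNReal.toReal_mul, mul_comm,
          cond_mul_eq_inter hT, inter_left_comm]

end IndepEvent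

lemma condExp_indicator_nonneg {Ω : Type*} {m' mΩ : MeasurableSpace Ω} (ν : Measure Ω)
    (s : Set Ω) : 0 ≤ᵐ[ν] ν⟦s | m'⟧ :=
  condExp_nonneg (.of_forall fun _ => indicator_nonneg (fun _ _ => zero_le_one) _)

section CondIndepProduct

variable {Ω α β : Type*} {m' mΩ : MeasurableSpace Ω} [StandardBorelSpace Ω] {hm' : m' ≤ mΩ}
  {ν : Measure Ω} [IsFiniteMeasure ν] [MeasurableSpace α] [MeasurableSpace β]
  {X : Ω → α} {W : Ω → β} {t : Set β}

lemma CondIndepFun.measureReal_preimage_inter (h : CondIndepFun m' hm' X W ν)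
    (hX : Measurable X) (hW : Measurable W) {u : Set α} (hu : MeasurableSet u)
    (ht : MeasurableSet t) :
    ν.real (X ⁻¹' u ∩ W ⁻¹' t) = ∫ ω in X ⁻¹' u, (ν⟦W ⁻¹' t | m'⟧) ω ∂ν := by
  set q := ν⟦W ⁻¹' t | m'⟧
  have hXu : MeasurableSet (X ⁻¹' u) := hX hu
  have hqi : Integrable q ν := integrable_condExp
  have h1u : Integrable ((X ⁻¹' u).indicator fun _ => (1 : ℝ)) ν :=
    (integrable_const 1).indicator hXu
  have hqu : q * (X ⁻¹' u).indicator (fun _ => (1 : ℝ)) = (X ⁻¹' u).indicator q := by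
    ext ω; by_cases hω : ω ∈ X ⁻¹' u <;> simp [hω]
  have hpull : ν[q * (X ⁻¹' u).indicator fun _ => (1 : ℝ) | m'] =ᵐ[ν] q * ν⟦X ⁻¹' u | m'⟧ :=
    condExp_mul_of_stronglyMeasurable_left stronglyMeasurable_condExp
      (hqu ▸ hqi.indicator hXu) h1u
  calc ν.real (X ⁻¹' u ∩ W ⁻¹' t)
      = ∫ ω, (ν⟦X ⁻¹' u ∩ W ⁻¹' t | m'⟧) ω ∂ν := by
        rw [integral_condExp hm', integral_indicator (hXu.inter (hW ht)), setIntegral_const,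
          smul_eq_mul, mul_one]
    _ = ∫ ω, (ν[q * (X ⁻¹' u).indicator fun _ => (1 : ℝ) | m']) ω ∂ν := by
        refine integral_congr_ae ?_
        filter_upwards [(condIndepFun_iff_condExp_inter_preimage_eq_mul hX hW).1 h u t hu ht,
          hpull] with ω hω hω'
        rw [hω, hω', Pi.mul_apply, mul_comm]
    _ = ∫ ω in X ⁻¹' u, q ω ∂ν := by
        rw [integral_condExp hm', hqu, integral_indicator hXu]

lemma CondIndepFun.map_restrict_eq_map_withDensity (h : CondIndepFun m' hm' X W ν)
    (hX : Measurable X) (hW : Measurable W) (ht : MeasurableSet t) :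
    (ν.restrict (W ⁻¹' t)).map X
      = (ν.withDensity fun ω => ENNReal.ofReal ((ν⟦W ⁻¹' t | m'⟧) ω)).map X := by
  refine Measure.ext fun u hu => ?_
  rw [Measure.map_apply hX hu, Measure.map_apply hX hu, Measure.restrict_apply (hX hu),
    withDensity_apply _ (hX hu), ← ofReal_integral_eq_lintegral_ofReal
      integrable_condExp.integrableOn (ae_restrict_of_ae (condExp_indicator_nonneg ν _)),
    ← h.measureReal_preimage_inter hX hW hu ht, measureReal_def, ENNReal.ofReal_toReal
      (measure_ne_top _ _)]

theorem CondIndepFun.setIntegral_preimage_eq_integral_mul_condExp {X : Ω → ℝ}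
    (h : CondIndepFun m' hm' X W ν) (hX : Measurable X) (hW : Measurable W)
    (ht : MeasurableSet t) :
    ∫ ω in W ⁻¹' t, X ω ∂ν = ∫ ω, X ω * (ν⟦W ⁻¹' t | m'⟧) ω ∂ν := by
  set q := ν⟦W ⁻¹' t | m'⟧
  have hq : Measurable q := (stronglyMeasurable_condExp.measurable).mono hm' le_rfl
  calc ∫ ω in W ⁻¹' t, X ω ∂ν
      = ∫ x, x ∂((ν.restrict (W ⁻¹' t)).map X) :=
        (integral_map hX.aemeasurable aestronglyMeasurable_id).symm
    _ = ∫ ω, X ω ∂(ν.withDensity fun ω => ENNReal.ofReal (q ω)) := by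
        rw [h.map_restrict_eq_map_withDensity hX hW ht]
        exact integral_map hX.aemeasurable aestronglyMeasurable_id
    _ = ∫ ω, X ω * q ω ∂ν := by
        rw [integral_withDensity_eq_integral_toReal_smul hq.ennreal_ofReal
          (Filter.Eventually.of_forall fun _ => ENNReal.ofReal_lt_top)]
        refine integral_congr_ae ?_
        filter_upwards [condExp_indicator_nonneg ν (W ⁻¹' t)] with ω hω
        rw [ENNReal.toReal_ofReal hω, smul_eq_mul, mul_comm]

end CondIndepProduct

lemma setIntegral_eq_measureReal_mul_setIntegral_cond {Ω : Type*} [MeasurableSpace Ω]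
    {ρ : Measure Ω} [IsFiniteMeasure ρ] {V B : Set Ω} (hV : MeasurableSet V) (hBV : B ≤ᵐ[ρ] V)
    (X : Ω → ℝ) : ∫ ω in B, X ω ∂ρ = ρ.real V * ∫ ω in B, X ω ∂(ρ[|V]) := by
  by_cases hρV : ρ V = 0
  · have hρB : ρ B = 0 := measure_mono_null_ae hBV hρV
    rw [Measure.restrict_eq_zero.2 hρB, measureReal_def, hρV]
    simp
  have hBV' : (B ∩ V : Set Ω) =ᵐ[ρ] B := by
    filter_upwards [hBV] with ω hω
    exact propext ⟨fun h => h.1, fun h => ⟨h, hω h⟩⟩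
  rw [cond, Measure.restrict_smul, integral_smul_measure, Measure.restrict_restrict' hV,
    Measure.restrict_congr_set hBV', smul_eq_mul, ENNReal.toReal_inv, ← measureReal_def,
    ← mul_assoc, mul_inv_cancel₀ ((measureReal_ne_zero_iff (measure_ne_top ρ V)).2 hρV), one_mul]

section Transport

variable {Ω β : Type*} {m' m₁ mΩ : MeasurableSpace Ω} [MeasurableSpace β] {T B : Set Ω}

lemma setIntegral_cond_eq_integral_mul_condExp [StandardBorelSpace Ω] {ν : Measure Ω}
    [IsFiniteMeasure ν] (hm' : m' ≤ mΩ) (hind : Indep m₁ m' ν) (hT₁ : MeasurableSet[m₁] T)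
    (hT : MeasurableSet T) (hνT : ν T ≠ 0) (hB : MeasurableSet B) {X : Ω → ℝ} {W : Ω → β}
    {t : Set β} (hX : Measurable X) (hW : Measurable W) (ht : MeasurableSet t)
    (hTB : T ∩ B = W ⁻¹' t) (h : CondIndepFun m' hm' X W ν) :
    ∫ ω in B, X ω ∂(ν[|T]) = ∫ ω, X ω * ((ν[|T])⟦B | m'⟧) ω ∂ν := by
  have hνT' : ν.real T ≠ 0 := (measureReal_ne_zero_iff (measure_ne_top ν T)).2 hνT
  calc ∫ ω in B, X ω ∂(ν[|T])
      = (ν.real T)⁻¹ * ∫ ω in W ⁻¹' t, X ω ∂ν := by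
        rw [cond, Measure.restrict_smul, integral_smul_measure, Measure.restrict_restrict hB,
          inter_comm, hTB, smul_eq_mul, ENNReal.toReal_inv, measureReal_def]
    _ = (ν.real T)⁻¹ * ∫ ω, X ω * (ν.real T * ((ν[|T])⟦B | m'⟧) ω) ∂ν := by
        rw [h.setIntegral_preimage_eq_integral_mul_condExp hX hW ht, ← hTB]
        congr 1
        refine integral_congr_ae ?_
        filter_upwards [condExp_indicator_inter_of_indep hm' hind hT₁ hT hνT hB] with ω hω
        rw [hω]
    _ = ∫ ω, X ω * ((ν[|T])⟦B | m'⟧) ω ∂ν := by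
        simp_rw [mul_left_comm (X _), integral_const_mul, ← mul_assoc, inv_mul_cancel₀ hνT',
          one_mul]

lemma measureReal_cond_eq_integral_condExp {ν : Measure Ω} [IsFiniteMeasure ν]
    (hm' : m' ≤ mΩ) (hind : Indep m₁ m' ν) (hT₁ : MeasurableSet[m₁] T) (hT : MeasurableSet T)
    (hνT : ν T ≠ 0) (hB : MeasurableSet B) :
    (ν[|T]).real B = ∫ ω, ((ν[|T])⟦B | m'⟧) ω ∂ν := by
  rw [← integral_cond_of_indep hm' hind hT₁ hT hνT stronglyMeasurable_condExp,
    integral_condExp hm', integral_indicator hB, setIntegral_const, smul_eq_mul, mul_one]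

variable {μ : Measure Ω} [IsFiniteMeasure μ] {V : Set Ω}

theorem setIntegral_cond_eq_measureReal_mul_integral_mul_condExp [StandardBorelSpace Ω]
    (hm' : m' ≤ mΩ) (hT₁ : MeasurableSet[m₁] T) (hT : MeasurableSet T) (hV : MeasurableSet V)
    (hTV : μ (T ∩ V) ≠ 0) (hB : MeasurableSet B) (hBV : B ≤ᵐ[μ] V) (hind : Indep m₁ m' (μ[|V]))
    {X : Ω → ℝ} {W : Ω → β} {t : Set β} (hX : Measurable X) (hW : Measurable W)
    (ht : MeasurableSet t) (hTB : T ∩ B = W ⁻¹' t) (h : CondIndepFun m' hm' X W (μ[|V])) :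
    ∫ ω in B, X ω ∂(μ[|T])
      = (μ[|T]).real V * ∫ ω, X ω * ((μ[|T ∩ V])⟦B | m'⟧) ω ∂(μ[|V]) := by
  have hVT : μ[|V] T ≠ 0 := (cond_pos_of_inter_ne_zero hV (by rwa [inter_comm])).ne'
  rw [setIntegral_eq_measureReal_mul_setIntegral_cond hV (cond_absolutelyContinuous.ae_le hBV),
    cond_cond_eq_cond_inter hT hV, inter_comm, ← cond_cond_eq_cond_inter hV hT,
    setIntegral_cond_eq_integral_mul_condExp hm' hind hT₁ hT hVT hB hX hW ht hTB h]

theorem measureReal_cond_eq_measureReal_mul_integral_condExp (hm' : m' ≤ mΩ)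
    (hT₁ : MeasurableSet[m₁] T) (hT : MeasurableSet T) (hV : MeasurableSet V)
    (hTV : μ (T ∩ V) ≠ 0) (hB : MeasurableSet B) (hBV : B ≤ᵐ[μ] V)
    (hind : Indep m₁ m' (μ[|V])) :
    (μ[|T]).real B = (μ[|T]).real V * ∫ ω, ((μ[|T ∩ V])⟦B | m'⟧) ω ∂(μ[|V]) := by
  have hVT : μ[|V] T ≠ 0 := (cond_pos_of_inter_ne_zero hV (by rwa [inter_comm])).ne'
  have h := setIntegral_eq_measureReal_mul_setIntegral_cond hV
    (cond_absolutelyContinuous.ae_le hBV) (ρ := μ[|T]) fun _ => (1 : ℝ)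
  rw [setIntegral_const, setIntegral_const, smul_eq_mul, smul_eq_mul, mul_one, mul_one,
    cond_cond_eq_cond_inter hT hV, inter_comm, ← cond_cond_eq_cond_inter hV hT] at h
  rw [h, measureReal_cond_eq_integral_condExp hm' hind hT₁ hT hVT hB, inter_comm,
    cond_cond_eq_cond_inter hV hT]

end Transport

end ProbabilityTheory

lemma MeasureTheory.Integrable.cond {Ω E : Type*} [MeasurableSpace Ω] [NormedAddCommGroup E]
    {μ : Measure Ω} {f : Ω → E} (hf : Integrable f μ) (s : Set Ω) : Integrable f (μ[|s]) := by
  by_cases hs : μ s = 0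
  · simp [cond_eq_zero_of_meas_eq_zero hs]
  · exact hf.restrict.smul_measure (ENNReal.inv_ne_top.2 hs)

lemma ind_mul_apply {Ω : Type*} (s : Set Ω) (f : Ω → ℝ) (ω : Ω) :
    ind s ω * f ω = s.indicator f ω := by
  by_cases h : ω ∈ s <;> simp [ind, h]

lemma integral_sum_ind_mul {Ω ι : Type*} [MeasurableSpace Ω] [MeasurableSpace ι]
    [MeasurableSingletonClass ι] {ρ : Measure Ω} {G : Ω → ι} (hG : Measurable G) {I : Finset ι}
    {f : ι → Ω → ℝ} (hf : ∀ i ∈ I, Integrable (f i) ρ) :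
    ∫ ω, ∑ i ∈ I, ind {ω' | G ω' = i} ω * f i ω ∂ρ
      = ∑ i ∈ I, ∫ ω in {ω' | G ω' = i}, f i ω ∂ρ := by
  have hGi : ∀ i, MeasurableSet {ω' | G ω' = i} := fun i => hG (measurableSet_singleton i)
  simp_rw [ind_mul_apply]
  rw [integral_finsetSum I fun i hi => (hf i hi).indicator (hGi i)]
  exact Finset.sum_congr rfl fun i _ => integral_indicator (hGi i)

lemma cov_add_integral_mul_sub_eq {Ω : Type*} [MeasurableSpace Ω] {ν : Measure Ω}
    {τ p₁ p₂ : Ω → ℝ} (c₁ c₂ : ℝ) (hp₁ : Integrable p₁ ν) (hp₂ : Integrable p₂ ν)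
    (hτp₁ : Integrable (fun ω => τ ω * p₁ ω) ν) (hτp₂ : Integrable (fun ω => τ ω * p₂ ω) ν) :
    cov ν τ (fun ω => p₁ ω * c₁ - p₂ ω * c₂)
        + (∫ ω, τ ω ∂ν) * (c₁ * ∫ ω, p₁ ω ∂ν - c₂ * ∫ ω, p₂ ω ∂ν)
      = c₁ * ∫ ω, τ ω * p₁ ω ∂ν - c₂ * ∫ ω, τ ω * p₂ ω ∂ν := by
  simp_rw [cov, mul_sub, ← mul_assoc]
  rw [integral_sub (hτp₁.mul_const c₁) (hτp₂.mul_const c₂),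
    integral_sub (hp₁.mul_const c₁) (hp₂.mul_const c₂)]
  simp only [integral_mul_const]
  ring

section Model

variable {Ω : Type*} {mH : MeasurableSpace Ω} [mΩ : MeasurableSpace Ω] [StandardBorelSpace Ω]
  {μ : Measure Ω} [IsProbabilityMeasure μ] {S N G : Ω → ℕ} {g : ℕ}

theorem cov_add_integral_mul_eq_setIntegral_sub (hS : Measurable S) (hN : Measurable N)
    (hG : Measurable G) (hGN : ∀ᵐ ω ∂μ, G ω ≤ N ω)
    (hpos : ∀ s, (s = 1 ∨ s = 2) → 0 < μ {ω | S ω = s ∧ g ≤ N ω})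
    {Y₁ Y₀ : Ω → ℝ} (hY₁ : Measurable Y₁) (hY₀ : Measurable Y₀) (hY₁i : Integrable Y₁ μ)
    (hY₀i : Integrable Y₀ μ) (hH : mH ≤ mΩ) {p : ℕ → Ω → ℝ}
    (hp : ∀ s, p s = (μ[|{ω | S ω = s ∧ g ≤ N ω}])[ind {ω | G ω = g} | mH])
    (hpbdd : ∀ s, ∀ᵐ ω ∂μ, 0 ≤ p s ω ∧ p s ω ≤ 1)
    (htrans₁ : CondIndepFun mH hH Y₁ (fun ω => (S ω, G ω)) (μ[|{ω | g ≤ N ω}]))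
    (htrans₀ : CondIndepFun mH hH Y₀ (fun ω => (S ω, G ω)) (μ[|{ω | g ≤ N ω}]))
    (hSH : Indep (MeasurableSpace.comap S inferInstance) mH (μ[|{ω | g ≤ N ω}])) :
    cov (μ[|{ω | g ≤ N ω}]) (fun ω => Y₁ ω - Y₀ ω)
        (fun ω => p 1 ω * ((μ[|{ω' | S ω' = 1}]) {ω' | g ≤ N ω'}).toReal
          - p 2 ω * ((μ[|{ω' | S ω' = 2}]) {ω' | g ≤ N ω'}).toReal)
      + (∫ ω, (Y₁ ω - Y₀ ω) ∂(μ[|{ω | g ≤ N ω}]))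
          * (((μ[|{ω | S ω = 1}]) {ω | G ω = g}).toReal
            - ((μ[|{ω | S ω = 2}]) {ω | G ω = g}).toReal)
    = ∫ ω in {ω | G ω = g}, (Y₁ ω - Y₀ ω) ∂(μ[|{ω | S ω = 1}])
      - ∫ ω in {ω | G ω = g}, (Y₁ ω - Y₀ ω) ∂(μ[|{ω | S ω = 2}]) := by
  set V := {ω | g ≤ N ω}
  set B := {ω | G ω = g}
  have hV : MeasurableSet V := hN measurableSet_Ici
  have hB : MeasurableSet B := hG (measurableSet_singleton g)
  have hBV : B ≤ᵐ[μ] V := hGN.mono fun ω hω (hGω : G ω = g) => show g ≤ N ω from hGω ▸ hω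
  have hT₁ : ∀ s, MeasurableSet[MeasurableSpace.comap S inferInstance] {ω | S ω = s} :=
    fun s => ⟨{s}, measurableSet_singleton s, rfl⟩
  have hT : ∀ s, MeasurableSet {ω | S ω = s} := fun s => hS (measurableSet_singleton s)
  have hTB : ∀ s, {ω | S ω = s} ∩ B = (fun ω => (S ω, G ω)) ⁻¹' {(s, g)} := by
    intro s; ext ω; simp [B, Prod.ext_iff]
  have hp' : ∀ s, (μ[|{ω | S ω = s} ∩ V])⟦B | mH⟧ = p s := fun s => (hp s).symm
  have hpm : ∀ s, AEStronglyMeasurable (p s) (μ[|V]) := fun s =>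
    hp' s ▸ (stronglyMeasurable_condExp.mono hH).aestronglyMeasurable
  have hpb : ∀ s, ∀ᵐ ω ∂(μ[|V]), ‖p s ω‖ ≤ 1 := fun s => cond_absolutelyContinuous.ae_le <|
    (hpbdd s).mono fun ω hω => abs_le.2 ⟨by linarith [hω.1], hω.2⟩
  have hpi : ∀ s, Integrable (p s) (μ[|V]) := fun s => .of_bound (hpm s) 1 (hpb s)
  have hYpi : ∀ {Y : Ω → ℝ}, Integrable Y μ → ∀ s, Integrable (fun ω => Y ω * p s ω) (μ[|V]) :=
    fun hYi s => (hYi.cond V).mul_bdd (hpm s) (hpb s)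
  have hE : ∀ s, (s = 1 ∨ s = 2) → ∫ ω in B, (Y₁ ω - Y₀ ω) ∂(μ[|{ω | S ω = s}])
      = ((μ[|{ω | S ω = s}]) V).toReal * ∫ ω, (Y₁ ω - Y₀ ω) * p s ω ∂(μ[|V]) := by
    intro s hs
    have htransport := fun {Y : Ω → ℝ} (hY : Measurable Y) hci =>
      setIntegral_cond_eq_measureReal_mul_integral_mul_condExp hH (hT₁ s) (hT s) hV
        (hpos s hs).ne' hB hBV hSH hY (hS.prodMk hG) (measurableSet_singleton _) (hTB s) hci
    simp_rw [sub_mul]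
    rw [integral_sub (hY₁i.cond _).integrableOn (hY₀i.cond _).integrableOn,
      integral_sub (hYpi hY₁i s) (hYpi hY₀i s), htransport hY₁ htrans₁, htransport hY₀ htrans₀,
      hp', mul_sub, measureReal_def]
  have hP : ∀ s, (s = 1 ∨ s = 2) → ((μ[|{ω | S ω = s}]) B).toReal
      = ((μ[|{ω | S ω = s}]) V).toReal * ∫ ω, p s ω ∂(μ[|V]) := by
    intro s hs
    rw [← hp' s]
    exact measureReal_cond_eq_measureReal_mul_integral_condExp hH (hT₁ s) (hT s) hV
      (hpos s hs).ne' hB hBV hSH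
  rw [hE 1 (.inl rfl), hE 2 (.inr rfl), hP 1 (.inl rfl), hP 2 (.inr rfl)]
  exact cov_add_integral_mul_sub_eq _ _ (hpi 1) (hpi 2)
    (by simp_rw [sub_mul]; exact (hYpi hY₁i 1).sub (hYpi hY₀i 1))
    (by simp_rw [sub_mul]; exact (hYpi hY₁i 2).sub (hYpi hY₀i 2))

end Model

theorem bias_decomposition_undefined_potential_outcomes_phi2_general
    {Ω : Type*} [mΩ : MeasurableSpace Ω] [StandardBorelSpace Ω]
    (μ : Measure Ω) [IsProbabilityMeasure μ]
    (gmax : ℕ)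
    (S A N G : Ω → ℕ)
    (hSmeas : Measurable S)
    (hGN : ∀ᵐ ω ∂μ, G ω ≤ N ω)
    (hNmeas : Measurable N) (hGmeas : Measurable G)
    -- positivity for the population indicator, N and V_g
    (hSVpos : ∀ s, (s = 1 ∨ s = 2) → ∀ g ≤ gmax, 0 < μ {ω | S ω = s ∧ g ≤ N ω})
    (Ypo : ℕ → ℕ → Ω → ℝ)
    (hYpomeas : ∀ a ≤ 1, ∀ g ≤ gmax, Measurable (Ypo a g))
    (hYposq : ∀ a ≤ 1, ∀ g ≤ gmax, MemLp (Ypo a g) 2 μ)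
    (Ya : ℕ → Ω → ℝ)
    (hYa : ∀ a ω, Ya a ω = ∑ g ∈ Finset.range (gmax + 1), ind {ω' | G ω' = g} ω * Ypo a g ω)
    (Y : Ω → ℝ)
    (e : ℕ → Ω → ℝ)
    -- transportability assumptions with undefined potential outcomes
    (mH : MeasurableSpace Ω) (hH : mH ≤ mΩ)
    (pg : ℕ → ℕ → Ω → ℝ)
    (hpg : ∀ s g, pg s g
      = (μ[|{ω | S ω = s ∧ g ≤ N ω}])[ind {ω | G ω = g} | mH])
    (hpgbdd : ∀ s g, ∀ᵐ ω ∂μ, 0 ≤ pg s g ω ∧ pg s g ω ≤ 1)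
    (htrans : ∀ a ≤ 1, ∀ g ≤ gmax,
      CondIndepFun mH hH (Ypo a g) (fun ω => (S ω, G ω)) (μ[|{ω | g ≤ N ω}]))
    (hSH : ∀ g ≤ gmax,
      Indep (MeasurableSpace.comap S inferInstance) mH (μ[|{ω | g ≤ N ω}])) :
    -- ψ − φ₂ = (ψ − φ₁) + T₃
    (((∫ ω, ind {ω' | A ω' = 1} ω * Y ω / e 1 ω ∂(μ[|{ω | S ω = 1}]))
        - ∫ ω, ind {ω' | A ω' = 0} ω * Y ω / e 0 ω ∂(μ[|{ω | S ω = 1}]))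
      - ∫ ω, (Ya 1 ω - Ya 0 ω) ∂(μ[|{ω | S ω = 2}]))
    = (((∫ ω, ind {ω' | A ω' = 1} ω * Y ω / e 1 ω ∂(μ[|{ω | S ω = 1}]))
        - ∫ ω, ind {ω' | A ω' = 0} ω * Y ω / e 0 ω ∂(μ[|{ω | S ω = 1}]))
      - ∫ ω, (Ya 1 ω - Ya 0 ω) ∂(μ[|{ω | S ω = 1}]))
      + ∑ g ∈ Finset.range (gmax + 1),
          (cov (μ[|{ω | g ≤ N ω}]) (fun ω => Ypo 1 g ω - Ypo 0 g ω)
              (fun ω =>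
                pg 1 g ω * ((μ[|{ω' | S ω' = 1}]) {ω' | g ≤ N ω'}).toReal
                  - pg 2 g ω * ((μ[|{ω' | S ω' = 2}]) {ω' | g ≤ N ω'}).toReal)
            + (∫ ω, (Ypo 1 g ω - Ypo 0 g ω) ∂(μ[|{ω | g ≤ N ω}]))
                * (((μ[|{ω | S ω = 1}]) {ω | G ω = g}).toReal
                    - ((μ[|{ω | S ω = 2}]) {ω | G ω = g}).toReal)) := by
  -- the later binder `mH` would otherwise be the measurable space found by instance search
  let := mΩ
  have hint : ∀ a ≤ 1, ∀ g ≤ gmax, Integrable (Ypo a g) μ :=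
    fun a ha g hg => (hYposq a ha g hg).integrable one_le_two
  have hφ : ∀ s, ∫ ω, (Ya 1 ω - Ya 0 ω) ∂(μ[|{ω | S ω = s}])
      = ∑ g ∈ Finset.range (gmax + 1),
          ∫ ω in {ω | G ω = g}, (Ypo 1 g ω - Ypo 0 g ω) ∂(μ[|{ω | S ω = s}]) := by
    intro s
    simp_rw [hYa, ← Finset.sum_sub_distrib, ← mul_sub]
    exact integral_sum_ind_mul hGmeas fun g hg =>
      ((hint 1 le_rfl g (Finset.mem_range_succ_iff.1 hg)).sub
        (hint 0 zero_le_one g (Finset.mem_range_succ_iff.1 hg))).cond _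
  have hlevel : ∀ g ∈ Finset.range (gmax + 1), _ := fun g hg =>
    have hg : g ≤ gmax := Finset.mem_range_succ_iff.1 hg
    cov_add_integral_mul_eq_setIntegral_sub hSmeas hNmeas hGmeas hGN (hSVpos · · g hg)
      (hYpomeas 1 le_rfl g hg) (hYpomeas 0 zero_le_one g hg) (hint 1 le_rfl g hg)
      (hint 0 zero_le_one g hg) hH (hpg · g) (hpgbdd · g) (htrans 1 le_rfl g hg)
      (htrans 0 zero_le_one g hg) (hSH g hg)
  rw [Finset.sum_congr rfl hlevel, Finset.sum_sub_distrib, hφ 1, hφ 2]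
  ring

/-- **Bias decomposition with undefined potential outcomes, transport part (Theorem 3,
second display).**  With `V_g = 1{N ≥ g}`, `τ(g) = Y^(1,g) − Y^(0,g)` (meaningful on
`{V_g = 1}`) and
`υ(g) = P(G=g|S=1,V_g=1,𝓗)·P(V_g=1|S=1) − P(G=g|S=2,V_g=1,𝓗)·P(V_g=1|S=2)`,
under the reference-population assumptions (under `P(·|S=1)`) and the transportability
assumptions with undefined potential outcomes,
`ψ − φ₂ = (ψ − φ₁) + Σ_g [Cov(τ(g), υ(g) | V_g=1) + E[τ(g)|V_g=1]·(P(G=g|S=1) − P(G=g|S=2))]`. -/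
theorem bias_decomposition_undefined_potential_outcomes_phi2
    {Ω : Type*} [mΩ : MeasurableSpace Ω] [StandardBorelSpace Ω] [Nonempty Ω]
    (μ : Measure Ω) [IsProbabilityMeasure μ]
    (gmax : ℕ)
    (S A N G : Ω → ℕ)
    (hS : ∀ ω, S ω = 1 ∨ S ω = 2) (hSmeas : Measurable S)
    (hA : ∀ ω, A ω ≤ 1) (hN : ∀ ω, N ω ≤ gmax)
    (hGN : ∀ᵐ ω ∂μ, G ω ≤ N ω)
    (hAmeas : Measurable A) (hNmeas : Measurable N) (hGmeas : Measurable G)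
    -- positivity for the population indicator, N and V_g
    (hSNpos : ∀ s, (s = 1 ∨ s = 2) → ∀ n ≤ gmax, 0 < μ {ω | S ω = s ∧ N ω = n})
    (hSVpos : ∀ s, (s = 1 ∨ s = 2) → ∀ g ≤ gmax, 0 < μ {ω | S ω = s ∧ g ≤ N ω})
    (Ypo : ℕ → ℕ → Ω → ℝ)
    (hYpomeas : ∀ a ≤ 1, ∀ g ≤ gmax, Measurable (Ypo a g))
    (hYposq : ∀ a ≤ 1, ∀ g ≤ gmax, MemLp (Ypo a g) 2 μ)
    (Ya : ℕ → Ω → ℝ)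
    (hYa : ∀ a ω, Ya a ω = ∑ g ∈ Finset.range (gmax + 1), ind {ω' | G ω' = g} ω * Ypo a g ω)
    (Y : Ω → ℝ)
    (hY : ∀ ω, Y ω = ind {ω' | A ω' = 1} ω * Ya 1 ω + ind {ω' | A ω' = 0} ω * Ya 0 ω)
    -- reference-population assumptions, under P₁ = μ[|{S=1}]
    (mG mF : MeasurableSpace Ω) (hGF : mG ≤ mF) (hF : mF ≤ mΩ)
    (π e ε : ℕ → Ω → ℝ)
    (hπ : ∀ a, π a = (μ[|{ω | S ω = 1}])[ind {ω | A ω = a} | mF])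
    (he : ∀ a, e a = (μ[|{ω | S ω = 1}])[ind {ω | A ω = a} | mG])
    -- the propensity scores do not depend on N
    (hπN : ∀ a ≤ 1,
      (μ[|{ω | S ω = 1}])[ind {ω | A ω = a} | mF ⊔ MeasurableSpace.comap N inferInstance]
        =ᵐ[μ[|{ω | S ω = 1}]] π a)
    (heN : ∀ a ≤ 1,
      (μ[|{ω | S ω = 1}])[ind {ω | A ω = a} | mG ⊔ MeasurableSpace.comap N inferInstance]
        =ᵐ[μ[|{ω | S ω = 1}]] e a)
    (hπpos : ∀ a ≤ 1, ∀ᵐ ω ∂(μ[|{ω | S ω = 1}]), 0 < π a ω)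
    (hepos : ∀ a ≤ 1, ∀ᵐ ω ∂(μ[|{ω | S ω = 1}]), 0 < e a ω)
    -- conditional exchangeability given (𝓕, N) under P₁
    (hexch : ∀ a ≤ 1,
      CondIndepFun (mF ⊔ MeasurableSpace.comap N inferInstance)
        (sup_le hF hNmeas.comap_le) (Ya a) A (μ[|{ω | S ω = 1}]))
    (hε : ∀ a ω, ε a ω = π a ω / e a ω)
    (hεint : ∀ a ≤ 1, Integrable (ε a) (μ[|{ω | S ω = 1}]))
    (hεYint : ∀ a ≤ 1, Integrable (fun ω => Ya a ω * ε a ω) (μ[|{ω | S ω = 1}]))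
    (hεY0int : ∀ a ≤ 1, Integrable (fun ω => Ypo a 0 ω * ε a ω) (μ[|{ω | S ω = 1}]))
    (hwint : ∀ a ≤ 1,
      Integrable (fun ω => ind {ω' | A ω' = a} ω * Y ω / e a ω) (μ[|{ω | S ω = 1}]))
    -- transportability assumptions with undefined potential outcomes
    (mH : MeasurableSpace Ω) (hH : mH ≤ mΩ)
    (pg : ℕ → ℕ → Ω → ℝ)
    (hpg : ∀ s g, pg s g
      = (μ[|{ω | S ω = s ∧ g ≤ N ω}])[ind {ω | G ω = g} | mH])
    (hpgbdd : ∀ s g, ∀ᵐ ω ∂μ, 0 ≤ pg s g ω ∧ pg s g ω ≤ 1)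
    (hpgmeas : ∀ s g, Measurable[mH] (pg s g))
    (htrans : ∀ a ≤ 1, ∀ g ≤ gmax,
      CondIndepFun mH hH (Ypo a g) (fun ω => (S ω, G ω)) (μ[|{ω | g ≤ N ω}]))
    (hSH : ∀ g ≤ gmax,
      Indep (MeasurableSpace.comap S inferInstance) mH (μ[|{ω | g ≤ N ω}])) :
    -- ψ − φ₂ = (ψ − φ₁) + T₃
    (((∫ ω, ind {ω' | A ω' = 1} ω * Y ω / e 1 ω ∂(μ[|{ω | S ω = 1}]))
        - ∫ ω, ind {ω' | A ω' = 0} ω * Y ω / e 0 ω ∂(μ[|{ω | S ω = 1}]))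
      - ∫ ω, (Ya 1 ω - Ya 0 ω) ∂(μ[|{ω | S ω = 2}]))
    = (((∫ ω, ind {ω' | A ω' = 1} ω * Y ω / e 1 ω ∂(μ[|{ω | S ω = 1}]))
        - ∫ ω, ind {ω' | A ω' = 0} ω * Y ω / e 0 ω ∂(μ[|{ω | S ω = 1}]))
      - ∫ ω, (Ya 1 ω - Ya 0 ω) ∂(μ[|{ω | S ω = 1}]))
      + ∑ g ∈ Finset.range (gmax + 1),
          (cov (μ[|{ω | g ≤ N ω}]) (fun ω => Ypo 1 g ω - Ypo 0 g ω)
              (fun ω =>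
                pg 1 g ω * ((μ[|{ω' | S ω' = 1}]) {ω' | g ≤ N ω'}).toReal
                  - pg 2 g ω * ((μ[|{ω' | S ω' = 2}]) {ω' | g ≤ N ω'}).toReal)
            + (∫ ω, (Ypo 1 g ω - Ypo 0 g ω) ∂(μ[|{ω | g ≤ N ω}]))
                * (((μ[|{ω | S ω = 1}]) {ω | G ω = g}).toReal
                    - ((μ[|{ω | S ω = 2}]) {ω | G ω = g}).toReal)) :=
  bias_decomposition_undefined_potential_outcomes_phi2_general (mΩ := mΩ) μ gmax S A N G hSmeas hGN
    hNmeas hGmeas hSVpos Ypo hYpomeas hYposq Ya hYa Y e mH hH pg hpg hpgbdd htrans hSH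
end
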